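/- arXiv:1708.08095 — 3 statements merged into one kernel-verified Lean document; each statement's English description precedes it below -/
import Mathlib

section
/- Let n be a positive integer, N = 2n, and let ε = (ε_1, ..., ε_N) be uniformly distributed on Ω = {ε ∈ {−1,1}^N : Σ_{i=1}^N ε_i = 0}, with expectation denoted E_S. Then for every a = (a_1, ..., a_N) ∈ ℝ^N, with b = (1/N) Σ_{i=1}^N a_i, one has Σ_{i=1}^N a_i² − N b² ≤ E_S |Σ_{i=1}^N a_i ε_i|². -/
/-- The set `Ω = {ε ∈ {-1,1}^N : ∑ ε_i = 0}`. -/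
def Omega (N : ℕ) : Finset (Fin N → ℤ) :=
  (Fintype.piFinset fun _ : Fin N => ({-1, 1} : Finset ℤ)).filter fun ε => ∑ i, ε i = 0

/-- Expectation with respect to the uniform distribution on `Ω`. -/
noncomputable def ES (N : ℕ) (g : (Fin N → ℤ) → ℝ) : ℝ :=
  (∑ ε ∈ Omega N, g ε) / ((Omega N).card : ℝ)

/-!
Write `C = #Ω`. Since `Ω` is invariant under permutations of the coordinates and these act
2-transitively, `∑_{ε ∈ Ω} ε_i ε_j` takes one value `T` for all `i ≠ j`, while it is `C` for
`i = j`. Summing `ε_i ∑_j ε_j = 0` over `Ω` gives `C + (N - 1) T = 0`, hence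
`E_S |∑ a_i ε_i|² = (N ∑ a_i² - (∑ a_i)²) / (N - 1)`. The left-hand side of the theorem is the
same nonnegative numerator divided by the larger `N`.
-/

open Finset

lemma Equiv.Perm.exists_apply_eq_and_apply_eq {α : Type*} [DecidableEq α] {i j k l : α}
    (hij : i ≠ j) (hkl : k ≠ l) : ∃ σ : Equiv.Perm α, σ i = k ∧ σ j = l := by
  have hk : Equiv.swap i k j ≠ k := by
    simpa using (Equiv.swap i k).injective.ne hij.symm
  refine ⟨(Equiv.swap i k).trans (Equiv.swap (Equiv.swap i k j) l), ?_, ?_⟩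
  · rw [Equiv.trans_apply, Equiv.swap_apply_left, Equiv.swap_apply_of_ne_of_ne hk.symm hkl]
  · rw [Equiv.trans_apply, Equiv.swap_apply_left]

lemma mem_Omega {N : ℕ} {ε : Fin N → ℤ} :
    ε ∈ Omega N ↔ (∀ i, ε i = -1 ∨ ε i = 1) ∧ ∑ i, ε i = 0 := by
  simp [Omega, Fintype.mem_piFinset]

lemma Omega_two_mul_nonempty (n : ℕ) : (Omega (2 * n)).Nonempty :=
  ⟨fun i => (-1) ^ (i : ℕ), mem_Omega.2 ⟨fun _ => (neg_one_pow_eq_or ℤ _).symm, by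
    rw [Fin.sum_univ_eq_sum_range (fun k => (-1 : ℤ) ^ k), neg_one_geom_sum,
      if_pos (even_two_mul n)]⟩⟩

lemma comp_perm_mem_Omega {N : ℕ} (σ : Equiv.Perm (Fin N)) {ε : Fin N → ℤ}
    (h : ε ∈ Omega N) : ε ∘ σ ∈ Omega N := by
  rw [mem_Omega] at h ⊢
  exact ⟨fun i => h.1 (σ i), (Equiv.sum_comp σ ε).trans h.2⟩

lemma sum_Omega_comp_perm {N : ℕ} {M : Type*} [AddCommMonoid M] (σ : Equiv.Perm (Fin N))
    (f : (Fin N → ℤ) → M) : ∑ ε ∈ Omega N, f (ε ∘ σ) = ∑ ε ∈ Omega N, f ε :=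
  sum_nbij' (· ∘ σ) (· ∘ σ.symm) (fun _ => comp_perm_mem_Omega σ)
    (fun _ => comp_perm_mem_Omega σ.symm) (fun _ _ => by ext; simp) (fun _ _ => by ext; simp)
    (fun _ _ => rfl)

lemma sum_Omega_mul_self {N : ℕ} (i : Fin N) :
    ∑ ε ∈ Omega N, (ε i * ε i : ℝ) = #(Omega N) := by
  rw [card_eq_sum_ones, Nat.cast_sum]
  refine sum_congr rfl fun ε hε => ?_
  rcases (mem_Omega.1 hε).1 i with h | h <;> simp [h]

lemma sum_Omega_mul_eq_of_ne {N : ℕ} {i j k l : Fin N} (hij : i ≠ j) (hkl : k ≠ l) :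
    ∑ ε ∈ Omega N, (ε i * ε j : ℝ) = ∑ ε ∈ Omega N, (ε k * ε l : ℝ) := by
  obtain ⟨σ, hi, hj⟩ := Equiv.Perm.exists_apply_eq_and_apply_eq hij hkl
  simpa [hi, hj] using (sum_Omega_comp_perm σ fun ε => (ε i * ε j : ℝ)).symm

lemma sub_one_mul_sum_Omega_mul_of_ne {N : ℕ} {i j : Fin N} (hij : i ≠ j) :
    ((N : ℝ) - 1) * ∑ ε ∈ Omega N, (ε i * ε j : ℝ) = -#(Omega N) := by
  have hrow : ∑ k, ∑ ε ∈ Omega N, (ε i * ε k : ℝ) = 0 := by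
    rw [sum_comm]
    refine sum_eq_zero fun ε hε => ?_
    rw [← mul_sum]
    exact mul_eq_zero_of_right _ (by exact_mod_cast (mem_Omega.1 hε).2)
  rw [← add_sum_erase _ _ (mem_univ i), sum_Omega_mul_self,
    sum_congr rfl fun k hk => sum_Omega_mul_eq_of_ne (ne_of_mem_erase hk).symm hij, sum_const,
    card_erase_of_mem (mem_univ i), card_univ, Fintype.card_fin, nsmul_eq_mul,
    Nat.cast_pred (Fin.pos i)] at hrow
  linarith

lemma sum_sum_mul_mul_of_diag_offdiag {ι R : Type*} [Fintype ι] [DecidableEq ι] [CommRing R]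
    (a : ι → R) (M : ι → ι → R) (d t : R) (hdiag : ∀ i, M i i = d)
    (hoff : ∀ i j, i ≠ j → M i j = t) :
    ∑ i, ∑ j, a i * a j * M i j = t * (∑ i, a i) ^ 2 + (d - t) * ∑ i, a i ^ 2 := by
  have hM : ∀ i j, M i j = t + if i = j then d - t else 0 := by
    intro i j
    split_ifs with h
    · rw [h, hdiag]; ring
    · rw [hoff i j h, add_zero]
  simp only [hM, mul_add, mul_ite, mul_zero, sum_add_distrib, sum_ite_eq, mem_univ, if_true]
  rw [sq, sum_mul_sum]
  simp only [mul_sum]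
  congr 1
  · exact sum_congr rfl fun i _ => sum_congr rfl fun j _ => by ring
  · exact sum_congr rfl fun i _ => by ring

lemma sum_Omega_sq_sum_mul {N : ℕ} (a : Fin N → ℝ) :
    ∑ ε ∈ Omega N, (∑ i, a i * ε i) ^ 2 =
      ∑ i, ∑ j, a i * a j * ∑ ε ∈ Omega N, (ε i * ε j : ℝ) := by
  calc _ = ∑ ε ∈ Omega N, ∑ i, ∑ j, a i * a j * (ε i * ε j : ℝ) := by
        refine sum_congr rfl fun ε _ => ?_
        rw [sq, sum_mul_sum]
        exact sum_congr rfl fun i _ => sum_congr rfl fun j _ => by ring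
    _ = _ := by
        rw [sum_comm]
        simp only [mul_sum]
        exact sum_congr rfl fun i _ => sum_comm

lemma sub_one_mul_sum_Omega_sq {N : ℕ} (hN : 1 < N) (a : Fin N → ℝ) :
    ((N : ℝ) - 1) * ∑ ε ∈ Omega N, (∑ i, a i * ε i) ^ 2 =
      #(Omega N) * (N * ∑ i, a i ^ 2 - (∑ i, a i) ^ 2) := by
  have h01 : (⟨0, by omega⟩ : Fin N) ≠ ⟨1, hN⟩ := by simp [Fin.ext_iff]
  rw [sum_Omega_sq_sum_mul, sum_sum_mul_mul_of_diag_offdiag a _ _ _ sum_Omega_mul_self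
    fun i j hij => sum_Omega_mul_eq_of_ne hij h01]
  linear_combination ((∑ i, a i) ^ 2 - ∑ i, a i ^ 2) * sub_one_mul_sum_Omega_mul_of_ne h01

lemma ES_sq_abs_sum_mul {N : ℕ} (hN : 1 < N) (hΩ : (Omega N).Nonempty) (a : Fin N → ℝ) :
    ES N (fun ε => |∑ i, a i * ε i| ^ 2) =
      (N * ∑ i, a i ^ 2 - (∑ i, a i) ^ 2) / (N - 1) := by
  have hC : (#(Omega N) : ℝ) ≠ 0 := by exact_mod_cast hΩ.card_pos.ne'
  have hN' : (N : ℝ) - 1 ≠ 0 := sub_ne_zero.2 (by exact_mod_cast hN.ne')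
  simp only [ES, sq_abs]
  rw [div_eq_div_iff hC hN', mul_comm, sub_one_mul_sum_Omega_sq hN, mul_comm]

theorem stmt1 (n : ℕ) (hn : 0 < n) (a : Fin (2 * n) → ℝ) :
    ∑ i, (a i) ^ 2 - (2 * n : ℝ) * ((∑ i, a i) / (2 * n : ℝ)) ^ 2 ≤
      ES (2 * n) fun ε => |∑ i, a i * (ε i : ℝ)| ^ 2 := by
  have hN : 1 < 2 * n := by omega
  have hN' : (1 : ℝ) < 2 * n := by exact_mod_cast hN
  have hvar : 0 ≤ 2 * n * ∑ i, a i ^ 2 - (∑ i, a i) ^ 2 := by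
    have := sq_sum_le_card_mul_sum_sq (s := univ) (f := a)
    rw [card_univ, Fintype.card_fin] at this
    push_cast at this
    linarith
  have hlhs : ∑ i, a i ^ 2 - (2 * n : ℝ) * ((∑ i, a i) / (2 * n)) ^ 2 =
      (2 * n * ∑ i, a i ^ 2 - (∑ i, a i) ^ 2) / (2 * n) := by
    field_simp
  rw [ES_sq_abs_sum_mul hN (Omega_two_mul_nonempty n), hlhs]
  push_cast
  exact div_le_div_of_nonneg_left hvar (by linarith) (by linarith)
end

section
/- Let n be a positive integer and 1 ≤ ℓ ≤ n. Let ξ be a hypergeometric random variable with parameters (2n, n, ℓ), and let S_ℓ = Σ_{i=1}^ℓ δ_i be a sum of ℓ independent Rademacher random variables (each uniform on {−1,1}). Then for every real p ≥ 1, E |ξ − E ξ|^p ≤ 2^{1−p} · E |2 S_ℓ|^p = 2 · E |S_ℓ|^p. -/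
/-- The probability that a hypergeometric random variable with parameters
`(N, n, ℓ)` takes the value `k`: `C(ℓ,k) C(N-ℓ, n-k) / C(N, n)`. -/
noncomputable def hgP (N n ℓ k : ℕ) : ℝ :=
  ((ℓ.choose k : ℝ) * ((N - ℓ).choose (n - k) : ℝ)) / ((N.choose n : ℝ))

/-- The mean of a hypergeometric random variable with parameters `(N, n, ℓ)`. -/
noncomputable def hgMean (N n ℓ : ℕ) : ℝ :=
  ∑ k ∈ Finset.range (ℓ + 1), (k : ℝ) * hgP N n ℓ k

/-- The `p`-th absolute central moment `E |ξ - E ξ|^p` of a hypergeometric random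
variable `ξ` with parameters `(N, n, ℓ)`. -/
noncomputable def hgCentralMoment (N n ℓ : ℕ) (p : ℝ) : ℝ :=
  ∑ k ∈ Finset.range (ℓ + 1), |(k : ℝ) - hgMean N n ℓ| ^ p * hgP N n ℓ k

/-- Expectation over `ℓ` independent Rademacher signs `δ = (δ_1, ..., δ_ℓ)`,
each uniform on `{-1, 1}`. -/
noncomputable def Edelta (ℓ : ℕ) (g : (Fin ℓ → ℤ) → ℝ) : ℝ :=
  (∑ δ ∈ Fintype.piFinset fun _ : Fin ℓ => ({-1, 1} : Finset ℤ), g δ) /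
    ((Fintype.piFinset fun _ : Fin ℓ => ({-1, 1} : Finset ℤ)).card : ℝ)

/-!
Since `ℓ ≤ n`, the factor `C(2n - ℓ, n - k)` of the hypergeometric weight is at most the
middle coefficient of row `2n - ℓ`, and the Wallis-type bounds `(m + 1) C(m, ⌊m/2⌋)² ≤ 4^m`
and `16^n ≤ (4n + 1) C(2n, n)²` give `2^ℓ C(2n - ℓ, ⌊(2n - ℓ)/2⌋) ≤ 2 C(2n, n)`. So the
hypergeometric weights are at most twice the binomial weights `C(ℓ, k) / 2^ℓ`, which are the
weights of `(S_ℓ + ℓ)/2`. The symmetry `k ↦ ℓ - k` puts the mean at `ℓ/2`, and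
`|k - ℓ/2| ≤ |2k - ℓ|` lets the two moments be compared term by term.
-/

open Finset

namespace Nat

theorem two_mul_add_one_mul_centralBinom_sq_le (t : ℕ) :
    (2 * t + 1) * centralBinom t ^ 2 ≤ 16 ^ t := by
  induction t with
  | zero => simp
  | succ t ih =>
    have hrec := succ_mul_centralBinom_succ t
    refine Nat.le_of_mul_le_mul_left ?_ (by positivity : 0 < (t + 1) ^ 2)
    calc (t + 1) ^ 2 * ((2 * (t + 1) + 1) * centralBinom (t + 1) ^ 2)
        = (2 * t + 3) * ((t + 1) * centralBinom (t + 1)) ^ 2 := by ring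
      _ = (4 * (2 * t + 1) * (2 * t + 3)) * ((2 * t + 1) * centralBinom t ^ 2) := by
          rw [hrec]; ring
      _ ≤ (16 * (t + 1) ^ 2) * 16 ^ t := Nat.mul_le_mul (by nlinarith) ih
      _ = (t + 1) ^ 2 * 16 ^ (t + 1) := by ring

theorem sixteen_pow_le_mul_centralBinom_sq (n : ℕ) :
    16 ^ n ≤ (4 * n + 1) * centralBinom n ^ 2 := by
  induction n with
  | zero => simp
  | succ n ih =>
    have hrec := succ_mul_centralBinom_succ n
    refine Nat.le_of_mul_le_mul_left ?_ (by positivity : 0 < (n + 1) ^ 2)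
    calc (n + 1) ^ 2 * 16 ^ (n + 1) = (16 * (n + 1) ^ 2) * 16 ^ n := by ring
      _ ≤ (16 * (n + 1) ^ 2) * ((4 * n + 1) * centralBinom n ^ 2) := by gcongr
      _ ≤ (4 * (4 * n + 5) * (2 * n + 1) ^ 2) * centralBinom n ^ 2 := by
          rw [← mul_assoc]; exact Nat.mul_le_mul_right _ (by nlinarith)
      _ = (n + 1) ^ 2 * ((4 * (n + 1) + 1) * centralBinom (n + 1) ^ 2) := by
          rw [show (n + 1) ^ 2 * ((4 * (n + 1) + 1) * centralBinom (n + 1) ^ 2)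
            = (4 * n + 5) * ((n + 1) * centralBinom (n + 1)) ^ 2 by ring, hrec]
          ring

theorem succ_mul_choose_half_sq_le (m : ℕ) : (m + 1) * m.choose (m / 2) ^ 2 ≤ 4 ^ m := by
  obtain ⟨t, rfl | rfl⟩ := even_or_odd' m
  · rw [Nat.mul_div_cancel_left t two_pos, ← centralBinom_eq_two_mul_choose, pow_mul]
    exact two_mul_add_one_mul_centralBinom_sq_le t
  · have hhalf : (2 * t + 1) / 2 = t := by omega
    have hcb : centralBinom (t + 1) = 2 * (2 * t + 1).choose t := by
      rw [centralBinom_eq_two_mul_choose, mul_add_one, choose_succ_succ, choose_symm_half]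
      ring
    refine Nat.le_of_mul_le_mul_left ?_ (by norm_num : 0 < 4)
    calc 4 * ((2 * t + 1 + 1) * (2 * t + 1).choose ((2 * t + 1) / 2) ^ 2)
        = (2 * (t + 1)) * centralBinom (t + 1) ^ 2 := by rw [hhalf, hcb]; ring
      _ ≤ (2 * (t + 1) + 1) * centralBinom (t + 1) ^ 2 := by gcongr; omega
      _ ≤ 16 ^ (t + 1) := two_mul_add_one_mul_centralBinom_sq_le (t + 1)
      _ = 4 * 4 ^ (2 * t + 1) := by rw [show (16 : ℕ) = 4 ^ 2 by rfl, ← pow_mul]; ring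

theorem two_pow_mul_choose_le {n ℓ : ℕ} (h : ℓ ≤ n) (j : ℕ) :
    2 ^ ℓ * (2 * n - ℓ).choose j ≤ 2 * centralBinom n := by
  set m := 2 * n - ℓ
  have hsq : (m + 1) * (2 ^ ℓ * m.choose (m / 2)) ^ 2 ≤ (m + 1) * (2 * centralBinom n) ^ 2 :=
    calc (m + 1) * (2 ^ ℓ * m.choose (m / 2)) ^ 2
        = 4 ^ ℓ * ((m + 1) * m.choose (m / 2) ^ 2) := by
          rw [show (4 : ℕ) = 2 ^ 2 by rfl, ← pow_mul, mul_comm 2 ℓ, pow_mul]; ring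
      _ ≤ 4 ^ ℓ * 4 ^ m := by gcongr; exact succ_mul_choose_half_sq_le m
      _ = 16 ^ n := by rw [← pow_add, show ℓ + m = 2 * n by omega, pow_mul]; rfl
      _ ≤ (4 * n + 1) * centralBinom n ^ 2 := sixteen_pow_le_mul_centralBinom_sq n
      _ ≤ (m + 1) * (2 * centralBinom n) ^ 2 := by
          rw [mul_pow, ← mul_assoc]; gcongr; omega
  calc 2 ^ ℓ * m.choose j ≤ 2 ^ ℓ * m.choose (m / 2) := by gcongr; exact choose_le_middle j m
    _ ≤ 2 * centralBinom n :=
        (Nat.pow_le_pow_iff_left two_ne_zero).1 (Nat.le_of_mul_le_mul_left hsq m.succ_pos)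

end Nat

theorem sum_range_choose_mul_choose_sub {N n ℓ : ℕ} (hℓn : ℓ ≤ n) (hℓN : ℓ ≤ N) :
    ∑ k ∈ range (ℓ + 1), ℓ.choose k * (N - ℓ).choose (n - k) = N.choose n := by
  conv_rhs => rw [← Nat.add_sub_cancel' hℓN, Nat.add_choose_eq,
    Nat.sum_antidiagonal_eq_sum_range_succ_mk]
  refine sum_subset (range_subset_range.2 (by omega)) fun k _ hk => ?_
  rw [Nat.choose_eq_zero_of_lt (by simpa using hk), zero_mul]

theorem hgP_nonneg (N n ℓ k : ℕ) : 0 ≤ hgP N n ℓ k := by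
  unfold hgP; positivity

theorem sum_hgP {N n ℓ : ℕ} (hℓn : ℓ ≤ n) (hnN : n ≤ N) :
    ∑ k ∈ range (ℓ + 1), hgP N n ℓ k = 1 := by
  have hpos : (0 : ℝ) < N.choose n := by exact_mod_cast Nat.choose_pos hnN
  simp only [hgP, ← sum_div]
  rw [div_eq_one_iff_eq hpos.ne']
  exact_mod_cast sum_range_choose_mul_choose_sub hℓn (hℓn.trans hnN)

theorem hgP_two_mul_sub {n ℓ k : ℕ} (hℓn : ℓ ≤ n) (hk : k ≤ ℓ) :
    hgP (2 * n) n ℓ (ℓ - k) = hgP (2 * n) n ℓ k := by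
  rw [hgP, hgP, Nat.choose_symm hk, show n - (ℓ - k) = (2 * n - ℓ) - (n - k) by omega,
    Nat.choose_symm (by omega)]

theorem sum_range_mul_eq_half_of_symm {ℓ : ℕ} {w : ℕ → ℝ}
    (hw : ∀ k ≤ ℓ, w (ℓ - k) = w k) (hw1 : ∑ k ∈ range (ℓ + 1), w k = 1) :
    ∑ k ∈ range (ℓ + 1), (k : ℝ) * w k = ℓ / 2 := by
  have hreflect :
      ∑ k ∈ range (ℓ + 1), (k : ℝ) * w k = ∑ k ∈ range (ℓ + 1), (ℓ - k : ℝ) * w k := by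
    rw [← sum_range_reflect]
    refine sum_congr rfl fun k hk => ?_
    have hkℓ : k ≤ ℓ := Nat.lt_succ_iff.1 (mem_range.1 hk)
    rw [Nat.add_sub_cancel, hw k hkℓ, Nat.cast_sub hkℓ]
  have htwice : 2 * ∑ k ∈ range (ℓ + 1), (k : ℝ) * w k = ℓ := by
    calc 2 * ∑ k ∈ range (ℓ + 1), (k : ℝ) * w k
        = ∑ k ∈ range (ℓ + 1), ((k : ℝ) * w k + (ℓ - k : ℝ) * w k) := by
          rw [sum_add_distrib, ← hreflect, two_mul]
      _ = ℓ * ∑ k ∈ range (ℓ + 1), w k := by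
          rw [mul_sum]; exact sum_congr rfl fun k _ => by ring
      _ = ℓ := by rw [hw1, mul_one]
  linarith

theorem hgMean_two_mul {n ℓ : ℕ} (h : ℓ ≤ n) : hgMean (2 * n) n ℓ = ℓ / 2 :=
  sum_range_mul_eq_half_of_symm (fun _ hk => hgP_two_mul_sub h hk) (sum_hgP h (by omega))

theorem hgP_two_mul_le_two_mul_choose_div {n ℓ : ℕ} (h : ℓ ≤ n) (k : ℕ) :
    hgP (2 * n) n ℓ k ≤ 2 * (ℓ.choose k / 2 ^ ℓ) := by
  have hkey : (2 : ℝ) ^ ℓ * (2 * n - ℓ).choose (n - k) ≤ 2 * (2 * n).choose n := by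
    exact_mod_cast Nat.two_pow_mul_choose_le h (n - k)
  have hpos : (0 : ℝ) < (2 * n).choose n := by exact_mod_cast Nat.choose_pos (by omega)
  rw [hgP, div_le_iff₀ hpos, mul_div_assoc', div_mul_eq_mul_div, le_div_iff₀ (by positivity)]
  calc (ℓ.choose k : ℝ) * (2 * n - ℓ).choose (n - k) * 2 ^ ℓ
      = ℓ.choose k * (2 ^ ℓ * (2 * n - ℓ).choose (n - k)) := by ring
    _ ≤ ℓ.choose k * (2 * (2 * n).choose n) := by gcongr
    _ = 2 * ℓ.choose k * (2 * n).choose n := by ring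

theorem sum_piFinset_signs_eq_sum_powerset {ι M : Type*} [Fintype ι] [DecidableEq ι]
    [AddCommMonoid M] (g : (ι → ℤ) → M) :
    ∑ δ ∈ Fintype.piFinset (fun _ : ι => ({-1, 1} : Finset ℤ)), g δ =
      ∑ s ∈ (univ : Finset ι).powerset, g fun i => if i ∈ s then 1 else -1 := by
  symm
  refine sum_nbij' (fun (s : Finset ι) i => if i ∈ s then 1 else -1)
    (fun δ => ({i | δ i = 1} : Finset ι)) ?_ ?_ ?_ ?_ fun _ _ => rfl
  · intro s _
    simp only [Fintype.mem_piFinset]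
    intro i
    split_ifs <;> simp
  · intro δ _
    simp
  · intro s _
    ext i
    by_cases h : i ∈ s <;> simp [h]
  · intro δ hδ
    funext i
    have hδi := Fintype.mem_piFinset.1 hδ i
    simp only [mem_insert, mem_singleton] at hδi
    rcases hδi with h | h <;> simp [h]

theorem sum_ite_mem_one_neg_one {ι : Type*} [Fintype ι] [DecidableEq ι] (s : Finset ι) :
    ∑ i, ((if i ∈ s then 1 else -1 : ℤ) : ℝ) = 2 * #s - Fintype.card ι := by
  have hind (i : ι) :
      ((if i ∈ s then 1 else -1 : ℤ) : ℝ) = 2 * (if i ∈ s then 1 else 0) - 1 := by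
    split_ifs <;> norm_num
  simp only [hind, sum_sub_distrib, ← mul_sum, sum_boole, sum_const, card_univ,
    filter_mem_eq_inter, univ_inter, nsmul_eq_mul, mul_one]

theorem sum_piFinset_signs {ι : Type*} [Fintype ι] [DecidableEq ι] (f : ℝ → ℝ) :
    ∑ δ ∈ Fintype.piFinset (fun _ : ι => ({-1, 1} : Finset ℤ)), f (∑ i, (δ i : ℝ)) =
      ∑ k ∈ range (Fintype.card ι + 1),
        ((Fintype.card ι).choose k : ℝ) * f (2 * k - Fintype.card ι) := by
  rw [sum_piFinset_signs_eq_sum_powerset]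
  simp only [sum_ite_mem_one_neg_one]
  rw [sum_powerset_apply_card (fun k => f (2 * k - Fintype.card ι)), card_univ]
  simp only [nsmul_eq_mul]

theorem Edelta_const_mul (ℓ : ℕ) (c : ℝ) (g : (Fin ℓ → ℤ) → ℝ) :
    Edelta ℓ (fun δ => c * g δ) = c * Edelta ℓ g := by
  simp only [Edelta, ← mul_sum, mul_div_assoc]

theorem Edelta_comp_sum (ℓ : ℕ) (f : ℝ → ℝ) :
    Edelta ℓ (fun δ => f (∑ i, (δ i : ℝ))) =
      ∑ k ∈ range (ℓ + 1), ℓ.choose k / 2 ^ ℓ * f (2 * k - ℓ) := by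
  rw [Edelta, sum_piFinset_signs, Fintype.card_piFinset, Fintype.card_fin, sum_div]
  simp [div_mul_eq_mul_div]

theorem stmt12_general (n ℓ : ℕ) (h2 : ℓ ≤ n) (p : ℝ) (hp : 1 ≤ p) :
    hgCentralMoment (2 * n) n ℓ p ≤
        (2 : ℝ) ^ (1 - p) * Edelta ℓ (fun δ => |2 * ∑ i, (δ i : ℝ)| ^ p) ∧
      (2 : ℝ) ^ (1 - p) * Edelta ℓ (fun δ => |2 * ∑ i, (δ i : ℝ)| ^ p) =
        2 * Edelta ℓ (fun δ => |∑ i, (δ i : ℝ)| ^ p) := by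
  have hscale : (2 : ℝ) ^ (1 - p) * Edelta ℓ (fun δ => |2 * ∑ i, (δ i : ℝ)| ^ p) =
      2 * Edelta ℓ (fun δ => |∑ i, (δ i : ℝ)| ^ p) := by
    simp only [abs_mul, abs_two, Real.mul_rpow zero_le_two (abs_nonneg _), Edelta_const_mul]
    rw [← mul_assoc, ← Real.rpow_add two_pos]
    norm_num
  refine ⟨?_, hscale⟩
  rw [hscale, Edelta_comp_sum ℓ (fun x => |x| ^ p), mul_sum, hgCentralMoment, hgMean_two_mul h2]
  refine sum_le_sum fun k _ => ?_
  have hdev : |(k : ℝ) - ℓ / 2| ≤ |(2 * k - ℓ : ℝ)| := by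
    rw [show (2 * k - ℓ : ℝ) = 2 * (k - ℓ / 2) by ring, abs_mul, abs_two]
    linarith [abs_nonneg ((k : ℝ) - ℓ / 2)]
  calc |(k : ℝ) - ℓ / 2| ^ p * hgP (2 * n) n ℓ k
      ≤ |(2 * k - ℓ : ℝ)| ^ p * (2 * (ℓ.choose k / 2 ^ ℓ)) :=
        mul_le_mul (Real.rpow_le_rpow (abs_nonneg _) hdev (by linarith))
          (hgP_two_mul_le_two_mul_choose_div h2 k) (hgP_nonneg _ _ _ _) (by positivity)
    _ = 2 * (ℓ.choose k / 2 ^ ℓ * |(2 * k - ℓ : ℝ)| ^ p) := by ring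

theorem stmt12 (n ℓ : ℕ) (h1 : 1 ≤ ℓ) (h2 : ℓ ≤ n) (p : ℝ) (hp : 1 ≤ p) :
    hgCentralMoment (2 * n) n ℓ p ≤
        (2 : ℝ) ^ (1 - p) * Edelta ℓ (fun δ => |2 * ∑ i, (δ i : ℝ)| ^ p) ∧
      (2 : ℝ) ^ (1 - p) * Edelta ℓ (fun δ => |2 * ∑ i, (δ i : ℝ)| ^ p) =
        2 * Edelta ℓ (fun δ => |∑ i, (δ i : ℝ)| ^ p) :=
  stmt12_general n ℓ h2 p hp
end

section
/- Let N be a positive integer, a, b ∈ ℝ^N, and let Π_N be the group of permutations of {1, ..., N} equipped with the uniform probability measure; expectation is denoted E. Define f(σ) = |Σ_{i=1}^N a_{σ(i)} b_i|. Then for every real p ≥ 2, E |f − E f|^p ≤ 4^p · N^{p/2} · p^{p/2} · ‖a‖_∞^p · ‖b‖_∞^p. -/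
/-- Expectation with respect to the uniform probability measure on the permutation
group `Π_N` of `{1, ..., N}`. -/
noncomputable def EPi (N : ℕ) (g : Equiv.Perm (Fin N) → ℝ) : ℝ :=
  (∑ σ : Equiv.Perm (Fin N), g σ) / (Fintype.card (Equiv.Perm (Fin N)) : ℝ)

/-!
Write `X σ = ∑ i, a (σ i) * b i - (∑ a) (∑ b) / N`, the centred statistic. Composing `σ` with a
transposition `(i j)` gives an exchangeable pair along which `X` has linear regression,
`∑_{i,j} (X σ - X (σ (i j))) = 2N X σ`, and bounded squared increments,
`∑_{i,j} (X σ - X (σ (i j)))² ≤ 8N² ‖a‖² ‖b‖²`. Stein's method of exchangeable pairs together with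
`(t - s)(t^{m+1} - s^{m+1}) ≤ (m+1)/2 (t - s)² (t^m + s^m)` for even `m` gives the recursion
`𝔼 X^{m+2} ≤ 2N(m+1) ‖a‖² ‖b‖² 𝔼 X^m`, hence `𝔼 X^{2k} ≤ (4kN ‖a‖² ‖b‖²)^k`.
Since `f = |X + const|`, we have `|f - 𝔼 f| ≤ |X| + 𝔼 |X|`, which costs a factor `4^k` in the
`2k`-th moment; the bound for real `p` follows from the one at `k = ⌈p/2⌉ ≤ p` by Hölder.
-/

open Finset Equiv
open scoped BigOperators

lemma pow_mul_pow_add_pow_mul_pow_le {x y : ℝ} (hx : 0 ≤ x) (hy : 0 ≤ y) (j k : ℕ) :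
    x ^ j * y ^ k + y ^ j * x ^ k ≤ x ^ (j + k) + y ^ (j + k) := by
  have h : 0 ≤ (x ^ j - y ^ j) * (x ^ k - y ^ k) := by
    rcases le_total x y with hxy | hxy
    · exact mul_nonneg_of_nonpos_of_nonpos (sub_nonpos.2 (pow_le_pow_left₀ hx hxy j))
        (sub_nonpos.2 (pow_le_pow_left₀ hx hxy k))
    · exact mul_nonneg (sub_nonneg.2 (pow_le_pow_left₀ hy hxy j))
        (sub_nonneg.2 (pow_le_pow_left₀ hy hxy k))
  rw [pow_add, pow_add]
  linarith

lemma geom_sum₂_le_half_mul_pow_add_pow {x y : ℝ} (hx : 0 ≤ x) (hy : 0 ≤ y) (n : ℕ) :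
    ∑ i ∈ range n, x ^ i * y ^ (n - 1 - i) ≤ n / 2 * (x ^ (n - 1) + y ^ (n - 1)) := by
  have hpair : ∀ i ∈ range n,
      x ^ i * y ^ (n - 1 - i) + y ^ i * x ^ (n - 1 - i) ≤ x ^ (n - 1) + y ^ (n - 1) := by
    intro i hi
    have hin : i + (n - 1 - i) = n - 1 := by have := mem_range.1 hi; omega
    simpa only [hin] using pow_mul_pow_add_pow_mul_pow_le hx hy i (n - 1 - i)
  have := sum_le_sum hpair
  rw [sum_add_distrib, ← geom_sum₂_comm x y, sum_const, card_range, nsmul_eq_mul] at this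
  linarith

lemma sub_mul_pow_succ_sub_pow_succ_le {m : ℕ} (hm : Even m) (t s : ℝ) :
    (t - s) * (t ^ (m + 1) - s ^ (m + 1)) ≤ (m + 1) / 2 * (t - s) ^ 2 * (t ^ m + s ^ m) := by
  have hsum : ∑ i ∈ range (m + 1), t ^ i * s ^ (m + 1 - 1 - i) ≤ (m + 1) / 2 * (t ^ m + s ^ m) :=
    calc ∑ i ∈ range (m + 1), t ^ i * s ^ (m + 1 - 1 - i)
        ≤ ∑ i ∈ range (m + 1), |t| ^ i * |s| ^ (m + 1 - 1 - i) :=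
          sum_le_sum fun i _ => by
            simpa only [abs_mul, abs_pow] using le_abs_self (t ^ i * s ^ (m + 1 - 1 - i))
      _ ≤ (m + 1) / 2 * (|t| ^ m + |s| ^ m) := by
          simpa using geom_sum₂_le_half_mul_pow_add_pow (abs_nonneg t) (abs_nonneg s) (m + 1)
      _ = (m + 1) / 2 * (t ^ m + s ^ m) := by rw [hm.pow_abs, hm.pow_abs]
  rw [← geom_sum₂_mul]
  nlinarith [mul_le_mul_of_nonneg_right hsum (sq_nonneg (t - s))]

section ExchangeablePair

variable {Ω S : Type*} [Fintype Ω] [Fintype S]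

lemma Function.Involutive.expect_comm {τ : Ω → Ω} (hτ : Function.Involutive τ)
    (F : Ω → Ω → ℝ) :
    𝔼 ω, F ω (τ ω) = 𝔼 ω, F (τ ω) ω :=
  Fintype.expect_equiv (hτ.toPerm τ) _ _ fun ω => by simp [hτ ω]

lemma Function.Involutive.expect_sub_mul_sub {τ : Ω → Ω} (hτ : Function.Involutive τ)
    (g h : Ω → ℝ) :
    𝔼 ω, (g ω - g (τ ω)) * (h ω - h (τ ω)) = 2 * 𝔼 ω, (g ω - g (τ ω)) * h ω := by
  have hswap := hτ.expect_comm fun ω ω' => (g ω - g ω') * h ω'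
  simp only [mul_sub, expect_sub_distrib, hswap, two_mul, sub_eq_add_neg (𝔼 ω, _),
    ← expect_neg_distrib]
  congr 1
  exact expect_congr rfl fun ω _ => by ring

variable (τ : S → Ω → Ω) (T : Ω → ℝ)

theorem expect_pow_add_two_le_of_exchangeable (hτ : ∀ s, Function.Involutive (τ s)) {c K : ℝ}
    (hdrift : ∀ ω, ∑ s, (T ω - T (τ s ω)) = c * T ω)
    (hvar : ∀ ω, ∑ s, (T ω - T (τ s ω)) ^ 2 ≤ K) {m : ℕ} (hm : Even m) :
    2 * c * 𝔼 ω, T ω ^ (m + 2) ≤ (m + 1) * K * 𝔼 ω, T ω ^ m := by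
  calc 2 * c * 𝔼 ω, T ω ^ (m + 2)
      = ∑ s, 2 * 𝔼 ω, (T ω - T (τ s ω)) * T ω ^ (m + 1) := by
        rw [← mul_sum, ← expect_sum_comm, mul_assoc]
        congr 1
        rw [mul_expect]
        refine expect_congr rfl fun ω _ => ?_
        rw [← sum_mul, hdrift]
        ring
    _ = ∑ s, 𝔼 ω, (T ω - T (τ s ω)) * (T ω ^ (m + 1) - T (τ s ω) ^ (m + 1)) := by
        simp only [(hτ _).expect_sub_mul_sub]
    _ ≤ ∑ s, 𝔼 ω, (m + 1) / 2 * (T ω - T (τ s ω)) ^ 2 * (T ω ^ m + T (τ s ω) ^ m) :=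
        sum_le_sum fun s _ => expect_le_expect fun ω _ => sub_mul_pow_succ_sub_pow_succ_le hm _ _
    _ = ∑ s, (m + 1) * 𝔼 ω, (T ω - T (τ s ω)) ^ 2 * T ω ^ m := by
        refine sum_congr rfl fun s _ => ?_
        have hswap := (hτ s).expect_comm fun ω ω' => (T ω - T ω') ^ 2 * T ω' ^ m
        simp only [sub_sq_comm (T (τ s _))] at hswap
        have hsplit : 𝔼 ω, (m + 1) / 2 * (T ω - T (τ s ω)) ^ 2 * (T ω ^ m + T (τ s ω) ^ m)
            = (m + 1) / 2 * (𝔼 ω, (T ω - T (τ s ω)) ^ 2 * T ω ^ m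
              + 𝔼 ω, (T ω - T (τ s ω)) ^ 2 * T (τ s ω) ^ m) := by
          rw [← expect_add_distrib, mul_expect]
          exact expect_congr rfl fun ω _ => by ring
        rw [hsplit, hswap]
        ring
    _ = (m + 1) * 𝔼 ω, (∑ s, (T ω - T (τ s ω)) ^ 2) * T ω ^ m := by
        simp only [← mul_sum, ← expect_sum_comm, sum_mul]
    _ ≤ (m + 1) * 𝔼 ω, K * T ω ^ m := by
        gcongr with ω _
        · exact hm.pow_nonneg _
        · exact hvar ω
    _ = (m + 1) * K * 𝔼 ω, T ω ^ m := by rw [mul_assoc, mul_expect univ _ K]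

theorem expect_pow_two_mul_le_of_exchangeable [Nonempty Ω]
    (hτ : ∀ s, Function.Involutive (τ s)) {c K : ℝ} (hc : 0 < c)
    (hdrift : ∀ ω, ∑ s, (T ω - T (τ s ω)) = c * T ω)
    (hvar : ∀ ω, ∑ s, (T ω - T (τ s ω)) ^ 2 ≤ K) (k : ℕ) :
    𝔼 ω, T ω ^ (2 * k) ≤ (k * (K / c)) ^ k := by
  have hKc : 0 ≤ K / c :=
    div_nonneg ((sum_nonneg fun s _ => sq_nonneg _).trans (hvar (Classical.arbitrary Ω))) hc.le
  induction k with
  | zero => simp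
  | succ k ih =>
    have hrec := expect_pow_add_two_le_of_exchangeable τ T hτ hdrift hvar (even_two_mul k)
    have hmom : 0 ≤ 𝔼 ω, T ω ^ (2 * k) :=
      expect_nonneg fun ω _ => (even_two_mul k).pow_nonneg _
    calc 𝔼 ω, T ω ^ (2 * (k + 1))
        ≤ (2 * k + 1) / 2 * (K / c) * 𝔼 ω, T ω ^ (2 * k) := by
          rw [mul_add_one, div_mul_div_comm, div_mul_eq_mul_div, le_div_iff₀ (by positivity)]
          push_cast at hrec
          linarith
      _ ≤ (k + 1) * (K / c) * (k * (K / c)) ^ k := by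
          gcongr
          linarith
      _ ≤ ((k + 1 : ℕ) * (K / c)) ^ (k + 1) := by
          rw [pow_succ', Nat.cast_succ]
          gcongr
          linarith

end ExchangeablePair

section PermStatistic

variable {ι : Type*} [Fintype ι]

def permStat (a b : ι → ℝ) (σ : Perm ι) : ℝ := ∑ i, a (σ i) * b i

lemma sum_sum_sub_mul_sub (x y : ι → ℝ) :
    ∑ i, ∑ j, (x i - x j) * (y i - y j)
      = 2 * Fintype.card ι * ∑ i, x i * y i - 2 * (∑ i, x i) * ∑ i, y i := by
  have hexpand : ∀ i j,
      (x i - x j) * (y i - y j) = x i * y i - x i * y j - x j * y i + x j * y j :=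
    fun i j => by ring
  simp only [hexpand, sum_add_distrib, sum_sub_distrib, sum_const, card_univ, nsmul_eq_mul,
    ← mul_sum, ← sum_mul]
  ring

variable [DecidableEq ι]

lemma permStat_sub_permStat_mul_swap (a b : ι → ℝ) (σ : Perm ι) (i j : ι) :
    permStat a b σ - permStat a b (σ * swap i j) = (a (σ i) - a (σ j)) * (b i - b j) := by
  rcases eq_or_ne i j with rfl | hij
  · simp [← Perm.one_def]
  have hsupp : ∀ k ∈ univ, k ∉ ({i, j} : Finset ι) →
      a (σ k) * b k - a (σ (swap i j k)) * b k = 0 := by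
    intro k _ hk
    simp only [mem_insert, mem_singleton, not_or] at hk
    rw [swap_apply_of_ne_of_ne hk.1 hk.2, sub_self]
  simp only [permStat, Perm.mul_apply, ← sum_sub_distrib]
  rw [← sum_subset (subset_univ _) hsupp, sum_pair hij, swap_apply_left, swap_apply_right]
  ring

lemma sum_permStat_sub_permStat_mul_swap (a b : ι → ℝ) (σ : Perm ι) :
    ∑ p : ι × ι, (permStat a b σ - permStat a b (σ * swap p.1 p.2))
      = 2 * Fintype.card ι * permStat a b σ - 2 * (∑ i, a i) * ∑ i, b i := by
  simp only [Fintype.sum_prod_type, permStat_sub_permStat_mul_swap]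
  rw [sum_sum_sub_mul_sub (fun i => a (σ i)) b, sum_comp σ a, permStat]

lemma sum_sq_permStat_sub_permStat_mul_swap_le {a b : ι → ℝ} {A B : ℝ}
    (ha : ∀ i, |a i| ≤ A) (hb : ∀ i, |b i| ≤ B) (σ : Perm ι) :
    ∑ p : ι × ι, (permStat a b σ - permStat a b (σ * swap p.1 p.2)) ^ 2
      ≤ 8 * Fintype.card ι ^ 2 * A ^ 2 * B ^ 2 := by
  have ha2 : ∀ i j, (a (σ i) - a (σ j)) ^ 2 ≤ 4 * A ^ 2 := fun i j => by
    have := abs_sub (a (σ i)) (a (σ j))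
    nlinarith [abs_nonneg (a (σ i) - a (σ j)), sq_abs (a (σ i) - a (σ j)), ha (σ i), ha (σ j)]
  have hb2 : ∑ i, b i * b i ≤ Fintype.card ι * B ^ 2 := by
    simpa [← sq] using sum_le_sum fun i (_ : i ∈ univ) =>
      sq_le_sq' (abs_le.1 (hb i)).1 (abs_le.1 (hb i)).2
  calc ∑ p : ι × ι, (permStat a b σ - permStat a b (σ * swap p.1 p.2)) ^ 2
      = ∑ i, ∑ j, (a (σ i) - a (σ j)) ^ 2 * (b i - b j) ^ 2 := by
        simp only [Fintype.sum_prod_type, permStat_sub_permStat_mul_swap, mul_pow]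
    _ ≤ ∑ i, ∑ j, 4 * A ^ 2 * (b i - b j) ^ 2 := by
        gcongr with i _ j _
        exact ha2 i j
    _ = 4 * A ^ 2 * (2 * Fintype.card ι * ∑ i, b i * b i - 2 * (∑ i, b i) * ∑ i, b i) := by
        simp only [← mul_sum, ← sum_sum_sub_mul_sub, sq]
    _ ≤ 4 * A ^ 2 * (2 * Fintype.card ι * (Fintype.card ι * B ^ 2)) := by
        gcongr
        nlinarith [sq_nonneg (∑ i, b i)]
    _ = 8 * Fintype.card ι ^ 2 * A ^ 2 * B ^ 2 := by ring

theorem expect_permStat_sub_pow_le [Nonempty ι] {a b : ι → ℝ} {A B : ℝ}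
    (ha : ∀ i, |a i| ≤ A) (hb : ∀ i, |b i| ≤ B) (k : ℕ) :
    𝔼 σ : Perm ι, (permStat a b σ - (∑ i, a i) * (∑ i, b i) / Fintype.card ι) ^ (2 * k)
      ≤ (k * (4 * Fintype.card ι * A ^ 2 * B ^ 2)) ^ k := by
  have hn : (0 : ℝ) < Fintype.card ι := by exact_mod_cast Fintype.card_pos
  have hdrift (σ : Perm ι) : ∑ p : ι × ι, (permStat a b σ - permStat a b (σ * swap p.1 p.2))
      = 2 * Fintype.card ι * (permStat a b σ - (∑ i, a i) * (∑ i, b i) / Fintype.card ι) := by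
    rw [sum_permStat_sub_permStat_mul_swap]
    field_simp
  have := expect_pow_two_mul_le_of_exchangeable (fun (p : ι × ι) σ => σ * swap p.1 p.2)
    (fun σ => permStat a b σ - (∑ i, a i) * (∑ i, b i) / Fintype.card ι)
    (fun p => mul_swap_involutive p.1 p.2) (c := 2 * Fintype.card ι) (by positivity)
    (by simpa only [sub_sub_sub_cancel_right] using hdrift)
    (by simpa only [sub_sub_sub_cancel_right] using
      sum_sq_permStat_sub_permStat_mul_swap_le ha hb) k
  convert this using 3
  field_simp
  ring

end PermStatistic

section Expectation

variable {Ω : Type*} [Fintype Ω] [Nonempty Ω]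

lemma pow_expect_le_expect_pow {f : Ω → ℝ} (hf : ∀ ω, 0 ≤ f ω) (n : ℕ) :
    (𝔼 ω, f ω) ^ n ≤ 𝔼 ω, f ω ^ n := by
  rcases n with _ | n
  · simp
  rw [Fintype.expect_eq_sum_div_card, Fintype.expect_eq_sum_div_card, div_pow,
    pow_succ (Fintype.card Ω : ℝ), ← div_div]
  gcongr
  simpa using pow_sum_div_card_le_sum_pow (s := univ) (fun ω _ => hf ω) n

lemma abs_sub_expect_le {f g : Ω → ℝ} (h : ∀ ω ω', |f ω - f ω'| ≤ g ω + g ω') (ω : Ω) :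
    |f ω - 𝔼 ω', f ω'| ≤ g ω + 𝔼 ω', g ω' := by
  calc |f ω - 𝔼 ω', f ω'| = |𝔼 ω', (f ω - f ω')| := by
        rw [expect_sub_distrib, Fintype.expect_const]
    _ ≤ 𝔼 ω', |f ω - f ω'| := abs_expect_le _ _
    _ ≤ 𝔼 ω', (g ω + g ω') := expect_le_expect fun ω' _ => h ω ω'
    _ = g ω + 𝔼 ω', g ω' := by rw [expect_add_distrib, Fintype.expect_const]

lemma expect_pow_le_of_le_add_expect {Y g : Ω → ℝ} (hY : ∀ ω, 0 ≤ Y ω) (hg : ∀ ω, 0 ≤ g ω)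
    (h : ∀ ω, Y ω ≤ g ω + 𝔼 ω', g ω') (n : ℕ) :
    𝔼 ω, Y ω ^ n ≤ 2 ^ n * 𝔼 ω, g ω ^ n := by
  rcases n with _ | n
  · simp
  have hEg : 0 ≤ 𝔼 ω, g ω := expect_nonneg fun ω _ => hg ω
  calc 𝔼 ω, Y ω ^ (n + 1)
      ≤ 𝔼 ω, 2 ^ n * (g ω ^ (n + 1) + (𝔼 ω', g ω') ^ (n + 1)) :=
        expect_le_expect fun ω _ => ((pow_le_pow_left₀ (hY ω) (h ω) _).trans
          (add_pow_le (hg ω) hEg _))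
    _ = 2 ^ n * (𝔼 ω, g ω ^ (n + 1) + (𝔼 ω', g ω') ^ (n + 1)) := by
        rw [← mul_expect, expect_add_distrib, Fintype.expect_const]
    _ ≤ 2 ^ n * (𝔼 ω, g ω ^ (n + 1) + 𝔼 ω, g ω ^ (n + 1)) := by
        gcongr
        exact pow_expect_le_expect_pow hg _
    _ = 2 ^ (n + 1) * 𝔼 ω, g ω ^ (n + 1) := by ring

lemma expect_rpow_le_of_expect_pow_two_mul_le {Y : Ω → ℝ} (hY : ∀ ω, 0 ≤ Y ω) {C : ℝ}
    (hC : 0 ≤ C) (h : ∀ k : ℕ, 𝔼 ω, Y ω ^ (2 * k) ≤ (k * C) ^ k) {p : ℝ} (hp : 1 ≤ p) :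
    𝔼 ω, Y ω ^ p ≤ (p * C) ^ (p / 2) := by
  set k := ⌈p / 2⌉₊
  have hp0 : 0 < p := by linarith
  have hk : 1 ≤ k := Nat.one_le_ceil_iff.2 (by positivity)
  have hpk : p ≤ 2 * k := by linarith [Nat.le_ceil (p / 2)]
  have hkp : (k : ℝ) ≤ p := by
    have := Nat.ceil_lt_add_one (show 0 ≤ p / 2 by positivity)
    rcases eq_or_lt_of_le hk with hk1 | hk2
    · rw [← hk1]; push_cast; linarith
    · have : (2 : ℝ) ≤ k := by exact_mod_cast hk2
      linarith
  have hq : 1 ≤ 2 * k / p := by rw [le_div_iff₀ hp0]; linarith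
  calc 𝔼 ω, Y ω ^ p
      = 𝔼 ω, 1 * Y ω ^ p := by simp
    _ ≤ (𝔼 ω, (1 : ℝ)) ^ (1 - (2 * k / p)⁻¹)
          * (𝔼 ω, 1 * (Y ω ^ p) ^ (2 * k / p)) ^ (2 * k / p)⁻¹ :=
        Real.compact_inner_le_weight_mul_Lp_of_nonneg univ hq (fun _ => zero_le_one)
          fun ω => Real.rpow_nonneg (hY ω) p
    _ = (𝔼 ω, Y ω ^ (2 * k)) ^ (p / (2 * k)) := by
        have hpow : ∀ ω, (Y ω ^ p) ^ (2 * k / p) = Y ω ^ (2 * k) := fun ω => by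
          rw [← Real.rpow_mul (hY ω), mul_div_cancel₀ _ hp0.ne', ← Nat.cast_ofNat,
            ← Nat.cast_mul, Real.rpow_natCast]
        simp only [Fintype.expect_const, Real.one_rpow, one_mul, hpow, inv_div]
    _ ≤ ((k * C) ^ k) ^ (p / (2 * k)) := by
        gcongr
        · exact expect_nonneg fun ω _ => pow_nonneg (hY ω) _
        · exact h k
    _ = (k * C) ^ (p / 2) := by
        rw [← Real.rpow_natCast, ← Real.rpow_mul (by positivity)]
        congr 1
        field_simp
    _ ≤ (p * C) ^ (p / 2) := by gcongr

end Expectation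

lemma sq_rpow_div_two {x : ℝ} (hx : 0 ≤ x) (p : ℝ) : (x ^ 2) ^ (p / 2) = x ^ p := by
  rw [← Real.rpow_natCast, ← Real.rpow_mul hx, Nat.cast_ofNat, mul_div_cancel₀ _ two_ne_zero]

lemma mul_sixteen_mul_sq_mul_sq_rpow_div_two {n p x y : ℝ} (hn : 0 ≤ n) (hp : 0 ≤ p)
    (hx : 0 ≤ x) (hy : 0 ≤ y) :
    (p * (16 * n * x ^ 2 * y ^ 2)) ^ (p / 2)
      = 4 ^ p * n ^ (p / 2) * p ^ (p / 2) * x ^ p * y ^ p := by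
  rw [show p * (16 * n * x ^ 2 * y ^ 2) = 4 ^ 2 * n * p * x ^ 2 * y ^ 2 by ring,
    Real.mul_rpow (by positivity) (by positivity), Real.mul_rpow (by positivity) (by positivity),
    Real.mul_rpow (by positivity) hp, Real.mul_rpow (by positivity) hn,
    sq_rpow_div_two (by norm_num), sq_rpow_div_two hx, sq_rpow_div_two hy]

lemma EPi_eq_expect (N : ℕ) (g : Perm (Fin N) → ℝ) : EPi N g = 𝔼 σ, g σ := by
  rw [EPi, Fintype.expect_eq_sum_div_card]

theorem stmt17 (N : ℕ) (hN : 0 < N) (a b : Fin N → ℝ) (p : ℝ) (hp : 2 ≤ p) :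
    (EPi N fun σ =>
        |(|∑ i, a (σ i) * b i|) - EPi N (fun σ' => |∑ i, a (σ' i) * b i|)| ^ p) ≤
      (4 : ℝ) ^ p * (N : ℝ) ^ (p / 2) * p ^ (p / 2) * ‖a‖ ^ p * ‖b‖ ^ p := by
  have : Nonempty (Fin N) := ⟨⟨0, hN⟩⟩
  have ha (i : Fin N) : |a i| ≤ ‖a‖ := by simpa using norm_le_pi_norm a i
  have hb (i : Fin N) : |b i| ≤ ‖b‖ := by simpa using norm_le_pi_norm b i
  set X : Perm (Fin N) → ℝ := fun σ => permStat a b σ - (∑ i, a i) * (∑ i, b i) / N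
  have hf (σ σ' : Perm (Fin N)) :
      |(|∑ i, a (σ i) * b i|) - (|∑ i, a (σ' i) * b i|)| ≤ |X σ| + |X σ'| :=
    (abs_abs_sub_abs_le_abs_sub _ _).trans (by simpa [X, permStat] using abs_sub (X σ) (X σ'))
  have hmom (k : ℕ) : 𝔼 σ : Perm (Fin N),
      |(|∑ i, a (σ i) * b i|) - (𝔼 σ' : Perm (Fin N), |∑ i, a (σ' i) * b i|)| ^ (2 * k)
      ≤ (k * (16 * N * ‖a‖ ^ 2 * ‖b‖ ^ 2)) ^ k :=
    calc _ ≤ 2 ^ (2 * k) * 𝔼 σ, |X σ| ^ (2 * k) :=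
          expect_pow_le_of_le_add_expect (fun _ => abs_nonneg _) (fun _ => abs_nonneg _)
            (abs_sub_expect_le hf) _
      _ = 4 ^ k * 𝔼 σ, X σ ^ (2 * k) := by
          simp only [(even_two_mul k).pow_abs, pow_mul]
          norm_num
      _ ≤ 4 ^ k * (k * (4 * N * ‖a‖ ^ 2 * ‖b‖ ^ 2)) ^ k := by
          gcongr
          simpa using expect_permStat_sub_pow_le ha hb k
      _ = (k * (16 * N * ‖a‖ ^ 2 * ‖b‖ ^ 2)) ^ k := by rw [← mul_pow]; ring_nf
  simp only [EPi_eq_expect]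
  calc _ ≤ (p * (16 * N * ‖a‖ ^ 2 * ‖b‖ ^ 2)) ^ (p / 2) :=
        expect_rpow_le_of_expect_pow_two_mul_le (fun _ => abs_nonneg _) (by positivity) hmom
          (by linarith)
    _ = (4 : ℝ) ^ p * (N : ℝ) ^ (p / 2) * p ^ (p / 2) * ‖a‖ ^ p * ‖b‖ ^ p :=
        mul_sixteen_mul_sq_mul_sq_rpow_div_two (by positivity) (by positivity) (norm_nonneg a)
          (norm_nonneg b)
end
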